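/- lim_{χ→0+} √χ · A(χ) = √π · Γ(1/4)/Γ(3/4), where A(χ) := ∫_χ^1 (1−ζ) ζ^{−3/4} (ζ−χ)^{−3/4} dζ. -/

import Mathlib

/-!
Substituting `ζ = χ / x` maps `(χ, 1)` onto itself and gives
`√χ · A(χ) = ∫_χ^1 (1 - χ/x) x^{-1/2} (1-x)^{-3/4} dx`. The factor `1 - χ/x` lies in `[0, 1]`
and tends to `1`, so by dominated convergence the limit is the Beta integral
`B(1/2, 1/4) = Γ(1/2) Γ(1/4) / Γ(3/4)`, and `Γ(1/2) = √π`.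
-/

/-- `A(χ) := ∫_χ^1 (1−ζ) ζ^{−3/4} (ζ−χ)^{−3/4} dζ`. -/
noncomputable def Aint (χ : ℝ) : ℝ :=
  ∫ ζ in χ..1, (1 - ζ) * ζ ^ (-(3/4) : ℝ) * (ζ - χ) ^ (-(3/4) : ℝ)

open Real MeasureTheory Filter Set Topology

lemma ofReal_cpow_mul_one_sub_cpow {x : ℝ} (hx : x ∈ uIcc 0 1) (a b : ℝ) :
    (x : ℂ) ^ ((a : ℂ) - 1) * (1 - (x : ℂ)) ^ ((b : ℂ) - 1)
      = ((x ^ (a - 1) * (1 - x) ^ (b - 1) : ℝ) : ℂ) := by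
  rw [uIcc_of_le zero_le_one] at hx
  push_cast
  rw [Complex.ofReal_cpow hx.1, Complex.ofReal_cpow (sub_nonneg.2 hx.2)]
  push_cast
  rfl

lemma intervalIntegrable_rpow_mul_one_sub_rpow {a b : ℝ} (ha : 0 < a) (hb : 0 < b) :
    IntervalIntegrable (fun x : ℝ => x ^ (a - 1) * (1 - x) ^ (b - 1)) volume 0 1 := by
  have h := (Complex.betaIntegral_convergent (u := a) (v := b) (by simpa) (by simpa)).congr
    fun x hx => ofReal_cpow_mul_one_sub_cpow (uIoc_subset_uIcc hx) a b
  have h_re := (intervalIntegrable_iff.1 h).re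
  simp only [RCLike.re_to_complex, Complex.ofReal_re] at h_re
  exact intervalIntegrable_iff.2 h_re

lemma integral_rpow_mul_one_sub_rpow {a b : ℝ} (ha : 0 < a) (hb : 0 < b) :
    ∫ x in (0 : ℝ)..1, x ^ (a - 1) * (1 - x) ^ (b - 1) = Gamma a * Gamma b / Gamma (a + b) := by
  have h := Complex.betaIntegral_eq_Gamma_mul_div a b (by simpa) (by simpa)
  rw [Complex.betaIntegral, intervalIntegral.integral_congr fun x hx =>
      ofReal_cpow_mul_one_sub_cpow hx a b, intervalIntegral.integral_ofReal,
    ← Complex.ofReal_add, Complex.Gamma_ofReal, Complex.Gamma_ofReal, Complex.Gamma_ofReal] at h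
  exact_mod_cast h

lemma image_const_div_Ioo_of_pos {a b c : ℝ} (ha : 0 < a) (hb : 0 < b) (hc : 0 < c) :
    (c / ·) '' Ioo a b = Ioo (c / b) (c / a) := by
  ext y
  constructor
  · rintro ⟨x, ⟨hax, hxb⟩, rfl⟩
    have hx : 0 < x := ha.trans hax
    exact ⟨(div_lt_div_iff_of_pos_left hc hb hx).2 hxb,
      (div_lt_div_iff_of_pos_left hc hx ha).2 hax⟩
  · rintro ⟨hby, hya⟩
    have hy : 0 < y := (div_pos hc hb).trans hby
    refine ⟨c / y, ⟨?_, ?_⟩, div_div_cancel₀ hc.ne'⟩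
    · rwa [lt_div_iff₀ hy, ← lt_div_iff₀' ha]
    · rwa [div_lt_iff₀ hy, ← div_lt_iff₀' hb]

theorem integral_Ioo_comp_const_div {E : Type*} [NormedAddCommGroup E] [NormedSpace ℝ E]
    {a b c : ℝ} (ha : 0 < a) (hb : 0 < b) (hc : 0 < c) (g : ℝ → E) :
    ∫ x in Ioo a b, (c / x ^ 2) • g (c / x) = ∫ y in Ioo (c / b) (c / a), g y := by
  have hder : ∀ x ∈ Ioo a b, HasDerivWithinAt (c / ·) (-(c / x ^ 2)) (Ioo a b) x := by
    intro x hx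
    have h := (hasDerivAt_inv (ha.trans hx.1).ne').const_mul c
    simp only [mul_neg, ← div_eq_mul_inv] at h
    exact h.hasDerivWithinAt
  have hinj : InjOn (c / ·) (Ioo a b) := fun x _ y _ hxy => by
    simpa only [div_div_cancel₀ hc.ne'] using congrArg (c / ·) hxy
  rw [← image_const_div_Ioo_of_pos ha hb hc,
    integral_image_eq_integral_abs_deriv_smul measurableSet_Ioo hder hinj]
  refine setIntegral_congr_fun measurableSet_Ioo fun x hx => ?_
  rw [abs_neg, abs_of_pos (div_pos hc (pow_pos (ha.trans hx.1) 2))]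

theorem tendsto_intervalIntegral_one_sub_div_smul {E : Type*} [NormedAddCommGroup E]
    [NormedSpace ℝ E] {f : ℝ → E} {b : ℝ} (hb : 0 < b) (hf : IntervalIntegrable f volume 0 b) :
    Tendsto (fun χ => ∫ x in χ..b, (1 - χ / x) • f x) (𝓝[>] 0) (𝓝 (∫ x in 0..b, f x)) := by
  -- extending by `0` on `(0, χ]` puts all the integrals on the fixed interval `(0, b]`
  set F : ℝ → ℝ → E := fun χ => (Ioi χ).indicator fun x => (1 - χ / x) • f x
  have hF_meas : ∀ χ, AEStronglyMeasurable (F χ) (volume.restrict (uIoc 0 b)) := by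
    intro χ
    rw [uIoc_of_le hb.le]
    exact ((by fun_prop : Measurable fun x : ℝ => 1 - χ / x).aestronglyMeasurable.smul
      hf.aestronglyMeasurable).indicator measurableSet_Ioi
  have hF_le : ∀ χ > 0, ∀ x, ‖F χ x‖ ≤ ‖f x‖ := by
    intro χ hχ x
    rw [norm_indicator_eq_indicator_norm]
    refine indicator_le' (fun x hx => ?_) (fun x _ => norm_nonneg (f x)) x
    have hx0 : 0 < x := hχ.trans hx
    rw [norm_smul, Real.norm_of_nonneg (sub_nonneg.2 ((div_le_one hx0).2 hx.out.le))]
    exact mul_le_of_le_one_left (norm_nonneg _) (sub_le_self _ (div_pos hχ hx0).le)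
  have hF_lim : ∀ x > 0, Tendsto (fun χ => F χ x) (𝓝[>] 0) (𝓝 (f x)) := by
    intro x hx
    have hcont : Tendsto (fun χ : ℝ => (1 - χ / x) • f x) (𝓝[>] 0) (𝓝 (f x)) := by
      have := ((continuous_const.sub (continuous_id.div_const x)).smul
        continuous_const).tendsto (0 : ℝ) (f := fun χ : ℝ => (1 - χ / x) • f x)
      simpa using this.mono_left nhdsWithin_le_nhds
    refine hcont.congr' ?_
    filter_upwards [nhdsWithin_le_nhds (Iio_mem_nhds hx)] with χ hχ
    exact (indicator_of_mem (show x ∈ Ioi χ from hχ) fun x => (1 - χ / x) • f x).symm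
  have hlim := intervalIntegral.tendsto_integral_filter_of_dominated_convergence
    (l := 𝓝[>] (0 : ℝ)) (F := F) (fun x => ‖f x‖)
    (Eventually.of_forall hF_meas)
    (eventually_mem_nhdsWithin.mono fun χ hχ => ae_of_all _ fun x _ => hF_le χ hχ x)
    hf.norm (ae_of_all _ fun x hx => hF_lim x (uIoc_of_le hb.le ▸ hx).1)
  refine hlim.congr' ?_
  filter_upwards [Ioo_mem_nhdsGT hb] with χ hχ
  rw [intervalIntegral.integral_of_le hb.le, intervalIntegral.integral_of_le hχ.2.le,
    setIntegral_indicator measurableSet_Ioi, Ioc_inter_Ioi, max_eq_right hχ.1.le]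

lemma pow_four_rpow_intCast_div_four {s : ℝ} (hs : 0 ≤ s) (n : ℤ) :
    (s ^ 4) ^ ((n : ℝ) / 4) = s ^ n := by
  rw [← rpow_natCast, ← rpow_mul hs, Nat.cast_ofNat, mul_div_cancel₀ _ four_ne_zero, rpow_intCast]

lemma sqrt_mul_Aint_integrand_comp_div {χ x : ℝ} (hχ : 0 < χ) (hχx : χ < x) (hx : x < 1) :
    √χ * (χ / x ^ 2 * ((1 - χ / x) * (χ / x) ^ (-(3/4) : ℝ) * (χ / x - χ) ^ (-(3/4) : ℝ)))
      = (1 - χ / x) * (x ^ ((1/2 : ℝ) - 1) * (1 - x) ^ ((1/4 : ℝ) - 1)) := by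
  have hx0 : 0 < x := hχ.trans hχx
  have hsub : χ / x - χ = χ * (1 - x) / x := by field_simp
  rw [hsub, div_rpow hχ.le hx0.le, div_rpow (by nlinarith) hx0.le, mul_rpow hχ.le (by linarith),
    sqrt_eq_rpow]
  -- with `χ = s⁴` and `x = t⁴` every quarter power becomes an integer power
  obtain ⟨s, hs, rfl⟩ : ∃ s, 0 < s ∧ χ = s ^ 4 := ⟨χ ^ (1/4 : ℝ), by positivity, by
    rw [← rpow_natCast, ← rpow_mul hχ.le]; norm_num⟩
  obtain ⟨t, ht, rfl⟩ : ∃ t, 0 < t ∧ x = t ^ 4 := ⟨x ^ (1/4 : ℝ), by positivity, by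
    rw [← rpow_natCast, ← rpow_mul hx0.le]; norm_num⟩
  have e₁ : (1/2 : ℝ) = ((2 : ℤ) : ℝ) / 4 := by norm_num
  have e₂ : (-(3/4) : ℝ) = ((-3 : ℤ) : ℝ) / 4 := by norm_num
  have e₃ : (1/2 : ℝ) - 1 = ((-2 : ℤ) : ℝ) / 4 := by norm_num
  have e₄ : (1/4 : ℝ) - 1 = -(3/4) := by norm_num
  rw [e₃, e₄, e₁, e₂]
  simp only [pow_four_rpow_intCast_div_four hs.le, pow_four_rpow_intCast_div_four ht.le]
  field_simp

lemma sqrt_mul_Aint {χ : ℝ} (hχ : 0 < χ) (hχ1 : χ < 1) :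
    √χ * Aint χ = ∫ x in χ..1, (1 - χ / x) * (x ^ ((1/2 : ℝ) - 1) * (1 - x) ^ ((1/4 : ℝ) - 1)) := by
  have hsubst := integral_Ioo_comp_const_div hχ one_pos hχ
    fun ζ => (1 - ζ) * ζ ^ (-(3/4) : ℝ) * (ζ - χ) ^ (-(3/4) : ℝ)
  rw [div_one, div_self hχ.ne'] at hsubst
  rw [Aint, intervalIntegral.integral_of_le hχ1.le, intervalIntegral.integral_of_le hχ1.le,
    integral_Ioc_eq_integral_Ioo, integral_Ioc_eq_integral_Ioo, ← hsubst, ← integral_const_mul]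
  exact setIntegral_congr_fun measurableSet_Ioo fun x hx =>
    sqrt_mul_Aint_integrand_comp_div hχ hx.1 hx.2

/-- lim_{χ→0+} √χ · A(χ) = √π · Γ(1/4)/Γ(3/4). -/
theorem stmt11 :
    Filter.Tendsto (fun χ : ℝ => Real.sqrt χ * Aint χ) (nhdsWithin 0 (Set.Ioi 0))
      (nhds (Real.sqrt Real.pi * Real.Gamma (1/4) / Real.Gamma (3/4))) := by
  have hbeta : √π * Gamma (1/4) / Gamma (3/4)
      = ∫ x in (0 : ℝ)..1, x ^ ((1/2 : ℝ) - 1) * (1 - x) ^ ((1/4 : ℝ) - 1) := by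
    rw [integral_rpow_mul_one_sub_rpow (by norm_num) (by norm_num), Gamma_one_half_eq]
    norm_num
  rw [hbeta]
  refine (tendsto_intervalIntegral_one_sub_div_smul one_pos
    (intervalIntegrable_rpow_mul_one_sub_rpow (by norm_num) (by norm_num))).congr' ?_
  filter_upwards [Ioo_mem_nhdsGT one_pos] with χ hχ
  exact (sqrt_mul_Aint hχ.1 hχ.2).symm
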